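/- arXiv:2411.09426 — 2 statements merged into one kernel-verified Lean document; each statement's English description precedes it below -/
import Mathlib

section
/- For fixed channel h ∈ ℂ^N, beamformer w ∈ ℂ^N, and interference-plus-noise power σ² > 0, define SINR = |hᴴw|²/σ² and, for scalars β ∈ ℂ and ω > 0, define the MSE e(β) = |1 - β*hᴴw|² + |β|²σ² and the WMMSE objective g(ω, β) = log ω - ω·e(β) + 1. Then max over ω > 0 and β ∈ ℂ of g(ω, β) equals log(1 + SINR), with optimizers β* = hᴴw/(|hᴴw|² + σ²) and ω* = 1/e(β*). -/
open Matrix ComplexOrder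

/-- Scalar WMMSE rate–MSE equivalence: with `z = hᴴw`, `SINR = |z|²/σ²`,
`e(β) = |1 - β* z|² + |β|²σ²` and `g(ω,β) = log ω - ω e(β) + 1`, the maximum of `g`
over `ω > 0, β ∈ ℂ` equals `log(1 + SINR)`, attained at `β* = z/(|z|²+σ²)`,
`ω* = 1/e(β*)`. -/
theorem stmt_5 {N : ℕ} (h w : Fin N → ℂ) (σsq : ℝ) (hσ : 0 < σsq) :
    let z : ℂ := star h ⬝ᵥ w
    let e : ℂ → ℝ := fun β => ‖(1 : ℂ) - (starRingEnd ℂ) β * z‖ ^ 2 + ‖β‖ ^ 2 * σsq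
    let g : ℝ → ℂ → ℝ := fun ω β => Real.log ω - ω * e β + 1
    let βstar : ℂ := z / ((‖z‖ ^ 2 + σsq : ℝ) : ℂ)
    let ωstar : ℝ := 1 / e βstar
    (∀ ω > 0, ∀ β : ℂ, g ω β ≤ Real.log (1 + ‖z‖ ^ 2 / σsq)) ∧
    0 < ωstar ∧
    g ωstar βstar = Real.log (1 + ‖z‖ ^ 2 / σsq) := by
  intro z e g βstar ωstar
  set A : ℝ := ‖z‖ ^ 2 + σsq with hA
  have hz2 : (0:ℝ) ≤ ‖z‖ ^ 2 := by positivity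
  have hA0 : 0 < A := by positivity
  have key : ∀ β : ℂ, e β = A * ‖β - z / (A : ℂ)‖ ^ 2 + σsq / A := by
    intro β
    simp only [e, Complex.sq_norm]
    simp only [Complex.normSq_apply, Complex.sub_re, Complex.sub_im, Complex.one_re,
      Complex.one_im, Complex.mul_re, Complex.mul_im, Complex.div_re, Complex.div_im,
      Complex.ofReal_re, Complex.ofReal_im, _root_.map_one, RingHom.coe_coe, Complex.conj_re,
      Complex.conj_im]
    have hA' : A = z.re ^ 2 + z.im ^ 2 + σsq := by
      rw [hA, Complex.sq_norm, Complex.normSq_apply]; ring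
    field_simp
    rw [hA']
    ring
  have hestar : e βstar = σsq / A := by
    rw [key βstar]
    have hb : βstar - z / (A : ℂ) = 0 := by
      show z / ((‖z‖ ^ 2 + σsq : ℝ) : ℂ) - z / (A : ℂ) = 0
      rw [hA]; ring
    rw [hb]
    simp
  have hσA : (0:ℝ) < σsq / A := div_pos hσ hA0
  have hlog : Real.log (1 + ‖z‖ ^ 2 / σsq) = Real.log (A / σsq) := by
    congr 1
    field_simp [hA]
    ring
  have hle : ∀ β : ℂ, σsq / A ≤ e β := by
    intro β
    rw [key β]
    nlinarith [norm_nonneg (β - z / (A : ℂ)), sq_nonneg ‖β - z / (A : ℂ)‖, hA0]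
  have hωstar : ωstar = A / σsq := by
    show 1 / e βstar = A / σsq
    rw [hestar]; field_simp
  refine ⟨?_, ?_, ?_⟩
  · intro ω hω β
    have h1 : Real.log (ω * (σsq / A)) ≤ ω * (σsq / A) - 1 :=
      Real.log_le_sub_one_of_pos (by positivity)
    rw [Real.log_mul (ne_of_gt hω) (ne_of_gt hσA)] at h1
    have h2 : ω * (σsq / A) ≤ ω * e β := by
      exact mul_le_mul_of_nonneg_left (hle β) (le_of_lt hω)
    rw [hlog, Real.log_div (ne_of_gt hA0) (ne_of_gt hσ)]
    have h3 : Real.log (σsq / A) = Real.log σsq - Real.log A :=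
      Real.log_div (ne_of_gt hσ) (ne_of_gt hA0)
    have h4 : ω * (σsq / A) - 1 ≤ ω * e β - 1 := by linarith
    show Real.log ω - ω * e β + 1 ≤ Real.log A - Real.log σsq
    have h5 : Real.log ω + Real.log σsq - Real.log A ≤ ω * e β - 1 := by
      calc Real.log ω + Real.log σsq - Real.log A
          = Real.log ω + Real.log (σsq / A) := by rw [h3]; ring
        _ ≤ ω * (σsq / A) - 1 := h1
        _ ≤ ω * e β - 1 := h4
    linarith [h5]
  · rw [hωstar]; positivity
  · show Real.log ωstar - ωstar * e βstar + 1 = Real.log (1 + ‖z‖ ^ 2 / σsq)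
    rw [hωstar, hestar, hlog]
    have : A / σsq * (σsq / A) = 1 := by field_simp
    rw [this]; ring
end

section
/- Under the same hypotheses as the previous statement, h_t(t) ≤ h_t(t₀) + ∇h_t(t₀)ᵀ(t - t₀) + (δ/2)‖t - t₀‖² with δ = (8π²/λ²)Σ_{l=1}^L |f_l|. -/
open Real

/-- Second-order Taylor upper bound for cosine:
`cos (x + d) ≤ cos x - d * sin x + d² / 2`. -/
lemma cos_upper_aux (x d : ℝ) :
    Real.cos (x + d) ≤ Real.cos x - d * Real.sin x + d ^ 2 / 2 := by
  set g : ℝ → ℝ := fun s => s ^ 2 / 2 - Real.cos (x + s) + Real.cos x - s * Real.sin x with hg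
  have hder : ∀ s : ℝ, HasDerivAt g (s + Real.sin (x + s) - Real.sin x) s := by
    intro s
    have h1 : HasDerivAt (fun s : ℝ => s ^ 2 / 2) s s := by
      simpa using (hasDerivAt_pow 2 s).div_const 2
    have h2 : HasDerivAt (fun s : ℝ => Real.cos (x + s)) (-Real.sin (x + s)) s := by
      simpa [Function.comp_def] using (Real.hasDerivAt_cos (x + s)).comp s ((hasDerivAt_id s).const_add x)
    have h3 : HasDerivAt (fun s : ℝ => s * Real.sin x) (Real.sin x) s := by
      simpa using (hasDerivAt_id s).mul_const (Real.sin x)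
    have := ((h1.sub h2).add_const (Real.cos x)).sub h3
    refine this.congr_deriv ?_
    ring
  have hsin : ∀ s : ℝ, |Real.sin (x + s) - Real.sin x| ≤ |s| := by
    intro s
    rw [Real.sin_sub_sin]
    have harg1 : (x + s - x) / 2 = s / 2 := by ring
    rw [harg1, abs_mul, abs_mul, abs_two]
    have hs2 : |Real.sin (s / 2)| ≤ |s| / 2 := by
      have := Real.abs_sin_le_abs (x := s / 2)
      rwa [abs_div, abs_two] at this
    have hcos : |Real.cos ((x + s + x) / 2)| ≤ 1 := Real.abs_cos_le_one _
    have h0 : (0:ℝ) ≤ |Real.sin (s / 2)| := abs_nonneg _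
    nlinarith
  have hcont : Continuous g := by
    simp only [hg]; fun_prop
  have hkey : 0 ≤ g d := by
    have hg0 : g 0 = 0 := by simp [hg]
    rcases le_total 0 d with hd0 | hd0
    · have mono : MonotoneOn g (Set.Ici 0) := by
        apply monotoneOn_of_deriv_nonneg (convex_Ici 0) hcont.continuousOn
        · intro s hs
          exact (hder s).differentiableAt.differentiableWithinAt
        · intro s hs
          rw [interior_Ici] at hs
          rw [(hder s).deriv]
          have := (abs_le.mp (hsin s)).1
          rw [abs_of_pos hs] at this
          linarith
      have := mono (Set.self_mem_Ici) (Set.mem_Ici.mpr hd0) hd0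
      linarith [hg0 ▸ this]
    · have anti : AntitoneOn g (Set.Iic 0) := by
        apply antitoneOn_of_deriv_nonpos (convex_Iic 0) hcont.continuousOn
        · intro s hs
          exact (hder s).differentiableAt.differentiableWithinAt
        · intro s hs
          rw [interior_Iic] at hs
          rw [(hder s).deriv]
          have := (abs_le.mp (hsin s)).2
          rw [abs_of_neg hs] at this
          linarith
      have := anti (Set.mem_Iic.mpr hd0) (Set.self_mem_Iic) hd0
      linarith [hg0 ▸ this]
  simp only [hg] at hkey
  linarith

/-- Lemma 1 (upper bound): with `h_t(t) = Σ_l |f_l| cos((2π/λ)(a_l·t) - φ_l)` and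
direction vectors `‖a_l‖² ≤ 2`, for all `t, t₀`:
`h_t(t) ≤ h_t(t₀) + ∇h_t(t₀)ᵀ(t-t₀) + (δ/2)‖t-t₀‖²` with `δ = (8π²/λ²)Σ_l|f_l|`. -/
theorem stmt_9 {L : ℕ} (f : Fin L → ℂ) (φ : Fin L → ℝ) (a : Fin L → Fin 2 → ℝ)
    (lam : ℝ) (hlam : 0 < lam) (ha : ∀ l, ∑ j, (a l j) ^ 2 ≤ 2)
    (t t₀ : Fin 2 → ℝ) :
    let ht : (Fin 2 → ℝ) → ℝ := fun s =>
      ∑ l, ‖f l‖ * Real.cos ((2 * π / lam) * (∑ j, a l j * s j) - φ l)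
    let grad : Fin 2 → ℝ := fun j =>
      ∑ l, -(‖f l‖ * (2 * π / lam) * a l j *
        Real.sin ((2 * π / lam) * (∑ i, a l i * t₀ i) - φ l))
    let δ : ℝ := (8 * π ^ 2 / lam ^ 2) * ∑ l, ‖f l‖
    ht t ≤ ht t₀ + (∑ j, grad j * (t j - t₀ j)) + (δ / 2) * ∑ j, (t j - t₀ j) ^ 2 := by
  intro ht grad δ
  have hc2 : (2 * π / lam) ^ 2 = 4 * π ^ 2 / lam ^ 2 := by
    field_simp; ring
  set c : ℝ := 2 * π / lam with hc
  set x : Fin L → ℝ := fun l => c * (∑ i, a l i * t₀ i) - φ l with hx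
  set d : Fin L → ℝ := fun l => c * (∑ j, a l j * (t j - t₀ j)) with hdd
  have harg : ∀ l, c * (∑ j, a l j * t j) - φ l = x l + d l := by
    intro l
    simp only [hx, hdd, Fin.sum_univ_two]
    ring
  -- Step 1: pointwise cosine upper bound
  have h1 : ht t ≤ ∑ l, ‖f l‖ * (Real.cos (x l) - d l * Real.sin (x l) + d l ^ 2 / 2) := by
    simp only [ht, ← hc]
    refine Finset.sum_le_sum fun l _ => ?_
    rw [harg l]
    exact mul_le_mul_of_nonneg_left (cos_upper_aux (x l) (d l)) (norm_nonneg (f l))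
  -- gradient term identity
  have hgrad : ∀ j, grad j = ∑ l, -(‖f l‖ * c * a l j * Real.sin (x l)) := by
    intro j
    simp only [grad, hx, hc]
  have h3 : ∑ j, grad j * (t j - t₀ j) = ∑ l, -(‖f l‖ * d l * Real.sin (x l)) := by
    calc ∑ j, grad j * (t j - t₀ j)
        = ∑ j, ∑ l, -(‖f l‖ * c * a l j * Real.sin (x l)) * (t j - t₀ j) := by
          refine Finset.sum_congr rfl fun j _ => ?_
          rw [hgrad j, Finset.sum_mul]
      _ = ∑ l, ∑ j, -(‖f l‖ * c * a l j * Real.sin (x l)) * (t j - t₀ j) :=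
          Finset.sum_comm
      _ = ∑ l, -(‖f l‖ * d l * Real.sin (x l)) := by
          refine Finset.sum_congr rfl fun l _ => ?_
          have hdl : d l = c * (a l 0 * (t 0 - t₀ 0) + a l 1 * (t 1 - t₀ 1)) := by
            simp only [hdd]; rw [Fin.sum_univ_two]
          rw [Fin.sum_univ_two, hdl]
          ring
  -- quadratic term bound
  have hδ : δ / 2 = c ^ 2 * ∑ l, ‖f l‖ := by
    simp only [δ, hc, hc2]
    ring
  have h2 : ∑ l, ‖f l‖ * (d l ^ 2 / 2) ≤ (δ / 2) * ∑ j, (t j - t₀ j) ^ 2 := by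
    rw [hδ, show (c ^ 2 * ∑ l, ‖f l‖) * ∑ j, (t j - t₀ j) ^ 2
      = ∑ l, ‖f l‖ * (c ^ 2 * ∑ j, (t j - t₀ j) ^ 2) by
        rw [mul_comm (c ^ 2), mul_assoc, Finset.sum_mul]]
    refine Finset.sum_le_sum fun l _ => ?_
    have hCS : d l ^ 2 ≤ c ^ 2 * (2 * ∑ j, (t j - t₀ j) ^ 2) := by
      simp only [hdd, Fin.sum_univ_two]
      have hal := ha l
      rw [Fin.sum_univ_two] at hal
      have hq : (a l 0 * (t 0 - t₀ 0) + a l 1 * (t 1 - t₀ 1)) ^ 2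
          ≤ 2 * ((t 0 - t₀ 0) ^ 2 + (t 1 - t₀ 1) ^ 2) := by
        nlinarith [sq_nonneg (a l 0 * (t 1 - t₀ 1) - a l 1 * (t 0 - t₀ 0)),
          mul_nonneg (sub_nonneg.mpr hal)
            (add_nonneg (sq_nonneg (t 0 - t₀ 0)) (sq_nonneg (t 1 - t₀ 1)))]
      calc (c * (a l 0 * (t 0 - t₀ 0) + a l 1 * (t 1 - t₀ 1))) ^ 2
          = c ^ 2 * (a l 0 * (t 0 - t₀ 0) + a l 1 * (t 1 - t₀ 1)) ^ 2 := by ring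
        _ ≤ c ^ 2 * (2 * ((t 0 - t₀ 0) ^ 2 + (t 1 - t₀ 1) ^ 2)) :=
            mul_le_mul_of_nonneg_left hq (sq_nonneg c)
    have := mul_le_mul_of_nonneg_left hCS (norm_nonneg (f l))
    linarith
  -- h_t(t₀)
  have hht0 : ht t₀ = ∑ l, ‖f l‖ * Real.cos (x l) := by
    simp only [ht, ← hc, hx]
  have hsplit : ∑ l, ‖f l‖ * (Real.cos (x l) - d l * Real.sin (x l) + d l ^ 2 / 2)
      = (∑ l, ‖f l‖ * Real.cos (x l)) + (∑ l, -(‖f l‖ * d l * Real.sin (x l)))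
        + ∑ l, ‖f l‖ * (d l ^ 2 / 2) := by
    rw [← Finset.sum_add_distrib, ← Finset.sum_add_distrib]
    exact Finset.sum_congr rfl fun l _ => by ring
  linarith
end
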